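/- In the stationary Heston model, the asymptotic variance of the normalized sample mean of returns is σ₁₁ = lim_{N→∞} (1/N) Var(Σ_{i=1}^N y_i) = Var(y_n) + (2/(1−e^{−kh})) Cov(y_n, y_{n+1}) = θh + θh(σ_v²/(4k²) − ρσ_v/k). -/

import Mathlib

open MeasureTheory ProbabilityTheory Real Filter

/-- Covariance of `f` and `g` under `μ`. -/
noncomputable def cov {Ω : Type*} [MeasurableSpace Ω] (μ : Measure Ω) (f g : Ω → ℝ) : ℝ :=
  (∫ ω, f ω * g ω ∂μ) - (∫ ω, f ω ∂μ) * (∫ ω, g ω ∂μ)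

/-- Asymptotic variance of the normalized sample mean of Heston returns:
`σ₁₁ = lim (1/N) Var(Σ_{i=1}^N y_i) = Var(y_n) + (2/(1−e^{−kh}))Cov(y_n, y_{n+1})
     = θh + θh(σ_v²/(4k²) − ρσ_v/k)`. -/
theorem asymptotic_variance_sample_mean {Ω : Type*} [MeasurableSpace Ω] (μ : Measure Ω)
    [IsProbabilityMeasure μ] (k θ σv ρ h : ℝ) (hk : 0 < k) (hθ : 0 < θ) (hh : 0 < h)
    (htilde : ℝ) (hht : htilde = (1 - Real.exp (-k * h)) / k)
    (y : ℕ → Ω → ℝ) (hL2 : ∀ i, MemLp (y i) 2 μ)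
    (hvar : ∀ i, cov μ (y i) (y i)
      = θ * h + (σv ^ 2 / (4 * k ^ 2) - ρ * σv / k) * θ * (h - htilde))
    (hcov1 : ∀ i, cov μ (y i) (y (i + 1))
      = θ * htilde ^ 2 * (σv ^ 2 / (8 * k) - ρ * σv / 2))
    (hcovm : ∀ i m, 1 ≤ m → cov μ (y i) (y (i + m))
      = Real.exp (-((m : ℝ) - 1) * k * h) * cov μ (y i) (y (i + 1))) :
    Tendsto (fun N : ℕ => (1 / (N : ℝ)) *
        cov μ (fun ω => ∑ i ∈ Finset.range N, y i ω) (fun ω => ∑ i ∈ Finset.range N, y i ω))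
      atTop (nhds (θ * h + θ * h * (σv ^ 2 / (4 * k ^ 2) - ρ * σv / k)))
    ∧ (θ * h + (σv ^ 2 / (4 * k ^ 2) - ρ * σv / k) * θ * (h - htilde)
        + (2 / (1 - Real.exp (-k * h))) * (θ * htilde ^ 2 * (σv ^ 2 / (8 * k) - ρ * σv / 2))
      = θ * h + θ * h * (σv ^ 2 / (4 * k ^ 2) - ρ * σv / k)) := by
  set E : ℝ := Real.exp (-k * h) with hEdef
  have hE0 : 0 < E := Real.exp_pos _
  have hE1 : E < 1 := by
    rw [hEdef, ← Real.exp_zero]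
    exact Real.exp_lt_exp.mpr (by nlinarith)
  have hu : (1 : ℝ) - E ≠ 0 := by linarith
  have hk' : k ≠ 0 := hk.ne'
  set V : ℝ := θ * h + (σv ^ 2 / (4 * k ^ 2) - ρ * σv / k) * θ * (h - htilde) with hV
  set C : ℝ := θ * htilde ^ 2 * (σv ^ 2 / (8 * k) - ρ * σv / 2) with hC
  have halg : V + (2 / (1 - E)) * C
      = θ * h + θ * h * (σv ^ 2 / (4 * k ^ 2) - ρ * σv / k) := by
    rw [hV, hC, hht]
    field_simp
    ring
  refine ⟨?_, halg⟩
  -- integrability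
  have hint1 : ∀ i, Integrable (y i) μ := fun i => (hL2 i).integrable one_le_two
  have hint2 : ∀ i j, Integrable (fun ω => y i ω * y j ω) μ := by
    intro i j
    have : MemLp (y i • y j) 1 μ :=
      (hL2 j).smul (hL2 i) (hpqr := ⟨by simpa using ENNReal.inv_two_add_inv_two⟩)
    exact this.integrable le_rfl
  -- bilinearity
  have hbil : ∀ N : ℕ,
      cov μ (fun ω => ∑ i ∈ Finset.range N, y i ω) (fun ω => ∑ i ∈ Finset.range N, y i ω)
      = ∑ i ∈ Finset.range N, ∑ j ∈ Finset.range N, cov μ (y i) (y j) := by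
    intro N
    unfold cov
    rw [integral_finset_sum _ (fun i _ => hint1 i)]
    have h1 : ∫ ω, (∑ i ∈ Finset.range N, y i ω) * (∑ j ∈ Finset.range N, y j ω) ∂μ
        = ∑ i ∈ Finset.range N, ∑ j ∈ Finset.range N, ∫ ω, y i ω * y j ω ∂μ := by
      have he : ∀ ω, (∑ i ∈ Finset.range N, y i ω) * (∑ j ∈ Finset.range N, y j ω)
          = ∑ i ∈ Finset.range N, ∑ j ∈ Finset.range N, (y i ω * y j ω) := by
        intro ω; rw [Finset.sum_mul_sum]
      simp_rw [he]
      rw [integral_finset_sum _ (fun i _ => integrable_finset_sum _ (fun j _ => hint2 i j))]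
      exact Finset.sum_congr rfl fun i _ => integral_finset_sum _ (fun j _ => hint2 i j)
    rw [h1, Finset.sum_mul_sum, ← Finset.sum_sub_distrib]
    exact Finset.sum_congr rfl fun i _ => (Finset.sum_sub_distrib _ _).symm
  -- symmetry
  have hsymm : ∀ i j, cov μ (y i) (y j) = cov μ (y j) (y i) := by
    intro i j
    unfold cov
    have he : (fun ω => y i ω * y j ω) = fun ω => y j ω * y i ω := by
      funext ω; ring
    rw [he, mul_comm (∫ ω, y i ω ∂μ)]
  -- off-diagonal values
  have hoff : ∀ i j : ℕ, i < j → cov μ (y i) (y j) = E ^ (j - i - 1) * C := by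
    intro i j hij
    obtain ⟨m, hm1, rfl⟩ : ∃ m, 1 ≤ m ∧ j = i + m := ⟨j - i, by omega, by omega⟩
    rw [hcovm i m hm1, hcov1]
    rw [show i + m - i - 1 = m - 1 by omega]
    rw [show (-((m : ℝ) - 1) * k * h) = ((m - 1 : ℕ) : ℝ) * (-k * h) by
      rw [Nat.cast_sub hm1]; push_cast; ring]
    rw [Real.exp_nat_mul]
  set G : ℕ → ℝ := fun M => ∑ t ∈ Finset.range M, E ^ t with hG
  -- closed form for the double sum
  have hF : ∀ N : ℕ, (∑ i ∈ Finset.range N, ∑ j ∈ Finset.range N, cov μ (y i) (y j))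
      = (N : ℝ) * V + 2 * C * ∑ M ∈ Finset.range N, G M := by
    intro N
    induction N with
    | zero => simp
    | succ N ih =>
      have hrow : ∀ M : ℕ, ∑ i ∈ Finset.range M, cov μ (y i) (y M) = C * G M := by
        intro M
        rw [Finset.sum_congr rfl fun i hi => hoff i M (Finset.mem_range.mp hi),
          ← Finset.sum_mul]
        have hr := Finset.sum_range_reflect (fun t => E ^ t) M
        have hGM : ∑ i ∈ Finset.range M, E ^ (M - i - 1) = G M := by
          show _ = ∑ t ∈ Finset.range M, E ^ t
          rw [← hr]
          exact Finset.sum_congr rfl fun i hi => by congr 1; omega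
        rw [hGM]; ring
      have step : ∑ i ∈ Finset.range (N + 1), ∑ j ∈ Finset.range (N + 1), cov μ (y i) (y j)
          = (∑ i ∈ Finset.range N, ∑ j ∈ Finset.range N, cov μ (y i) (y j))
            + (∑ i ∈ Finset.range N, cov μ (y i) (y N))
            + ((∑ j ∈ Finset.range N, cov μ (y N) (y j)) + cov μ (y N) (y N)) := by
        simp_rw [Finset.sum_range_succ]
        rw [Finset.sum_add_distrib]
      have hcol : ∑ j ∈ Finset.range N, cov μ (y N) (y j) = C * G N := by
        rw [Finset.sum_congr rfl fun j _ => hsymm N j]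
        exact hrow N
      rw [step, ih, hrow N, hcol, hvar N, Finset.sum_range_succ]
      push_cast
      ring
  -- limits
  have hGlim : Tendsto G atTop (nhds (1 - E)⁻¹) :=
    (hasSum_geometric_of_lt_one hE0.le hE1).tendsto_sum_nat
  have hces : Tendsto (fun n : ℕ => ((n : ℝ)⁻¹) * ∑ M ∈ Finset.range n, G M)
      atTop (nhds (1 - E)⁻¹) := hGlim.cesaro
  have h1 : Tendsto (fun N : ℕ => ((N : ℝ)⁻¹) * ((N : ℝ) * V)) atTop (nhds V) := by
    apply Tendsto.congr' _ (tendsto_const_nhds (x := V))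
    filter_upwards [eventually_gt_atTop 0] with N hN
    have : (N : ℝ) ≠ 0 := Nat.cast_ne_zero.mpr hN.ne'
    field_simp
  have hcomb : Tendsto (fun N : ℕ => ((N : ℝ)⁻¹) * ((N : ℝ) * V)
      + 2 * C * (((N : ℝ)⁻¹) * ∑ M ∈ Finset.range N, G M))
      atTop (nhds (V + 2 * C * (1 - E)⁻¹)) :=
    h1.add (hces.const_mul (2 * C))
  have hfin : V + 2 * C * (1 - E)⁻¹
      = θ * h + θ * h * (σv ^ 2 / (4 * k ^ 2) - ρ * σv / k) := by
    rw [← halg]; ring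
  rw [← hfin]
  apply Tendsto.congr _ hcomb
  intro N
  rw [hbil N, hF N]
  ring
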